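/- arXiv:1804.02787 — 3 statements merged into one kernel-verified Lean document; each statement's English description precedes it below -/
import Mathlib

section
/- Theorem 8.3 of [4]: Let a countably additive transition function p on a measurable space (X,Σ) be given, with Markov operator A on ba(X,Σ). If the Markov chain has exactly one invariant finitely additive probability measure (Δ_ba is a singleton {μ}), then this measure μ is countably additive. -/
open MeasureTheory Set Filter Topology Function

/-- A bounded finitely additive (signed) set function on the σ-algebra. -/
def IsFinAdd {X : Type*} [MeasurableSpace X] (μ : Set X → ℝ) : Prop :=
  μ ∅ = 0 ∧ ∀ E F : Set X, MeasurableSet E → MeasurableSet F → Disjoint E F →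
    μ (E ∪ F) = μ E + μ F

/-- Nonnegativity on measurable sets. -/
def IsNonnegSF {X : Type*} [MeasurableSpace X] (μ : Set X → ℝ) : Prop :=
  ∀ E : Set X, MeasurableSet E → 0 ≤ μ E

/-- Countable additivity on the σ-algebra. -/
def IsCtblAdd {X : Type*} [MeasurableSpace X] (μ : Set X → ℝ) : Prop :=
  ∀ E : ℕ → Set X, (∀ n, MeasurableSet (E n)) → Pairwise (Disjoint on E) →
    HasSum (fun n => μ (E n)) (μ (⋃ n, E n))

/-- A nonnegative finitely additive measure is purely finitely additive if the only
countably additive measure `lam` with `0 ≤ lam ≤ μ` is `lam = 0`. -/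
def IsPurelyFinAdd {X : Type*} [MeasurableSpace X] (μ : Set X → ℝ) : Prop :=
  ∀ lam : Set X → ℝ, IsFinAdd lam → IsCtblAdd lam →
    (∀ E, MeasurableSet E → 0 ≤ lam E) → (∀ E, MeasurableSet E → lam E ≤ μ E) →
    ∀ E, MeasurableSet E → lam E = 0

/-- A countably additive transition function (transition probability). -/
def IsTransFun {X : Type*} [MeasurableSpace X] (p : X → Set X → ℝ) : Prop :=
  (∀ (x : X) (E : Set X), MeasurableSet E → 0 ≤ p x E ∧ p x E ≤ 1) ∧
  (∀ x : X, p x Set.univ = 1) ∧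
  (∀ E : Set X, MeasurableSet E → Measurable fun x => p x E) ∧
  (∀ x : X, IsFinAdd (p x) ∧ IsCtblAdd (p x))

/-- The integral of a bounded measurable function with respect to a (finitely additive)
set function, defined by the layer-cake formula. -/
noncomputable def faIntegral {X : Type*} [MeasurableSpace X] (μ : Set X → ℝ) (f : X → ℝ) : ℝ :=
  (∫ t in Set.Ioi (0:ℝ), μ {x | t < f x}) - (∫ t in Set.Ioi (0:ℝ), μ {x | f x < -t})

/-- The Markov operator `A` on finitely additive measures: `(Aμ)(E) = ∫ p(x,E) μ(dx)`. -/
noncomputable def markovOp {X : Type*} [MeasurableSpace X] (p : X → Set X → ℝ)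
    (μ : Set X → ℝ) : Set X → ℝ :=
  fun E => faIntegral μ fun x => p x E

/-- `Δ_ba`: the set of invariant finitely additive probability measures. -/
def InvProbSet {X : Type*} [MeasurableSpace X] (p : X → Set X → ℝ) : Set (Set X → ℝ) :=
  {μ | IsFinAdd μ ∧ IsNonnegSF μ ∧ μ Set.univ = 1 ∧
    ∀ E : Set X, MeasurableSet E → markovOp p μ E = μ E}

open ProbabilityTheory
open scoped symmDiff ENNReal NNReal

/-! Run the chain from a Dirac mass and let `σₙ` be the Cesàro averages of its distributions.
Along any ultrafilter the values `σₙ s` converge to a finitely additive probability `ν`; it is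
invariant because `κ ∘ₘ σₙ - σₙ = O(1/n)` and the Markov operator, a layer-cake integral of
monotone functions of `t`, passes to such limits (Riemann sums). By uniqueness `ν = μ`, so
`σₙ → μ` setwise. Finally a setwise limit of probability measures is countably additive
(Nikodym): the Baire category theorem on the complete space of measurable sets with distance
`λ (s ∆ t)` makes the convergence uniform on sets of small `λ`-measure. -/

section RiemannSums

variable {h : ℝ → ℝ}

lemma integral_Ioi_eq_inv_mul_intervalIntegral_div (hv : ∀ t, 1 ≤ t → h t = 0) {m : ℕ}
    (hm : 0 < m) :
    ∫ t in Ioi (0 : ℝ), h t = (m : ℝ)⁻¹ * ∫ s in (0 : ℝ)..0 + m, h (s / m) := by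
  have hm' : (m : ℝ) ≠ 0 := by positivity
  rw [intervalIntegral.integral_comp_div h hm', zero_add, zero_div, div_self hm', smul_eq_mul,
    inv_mul_cancel_left₀ hm', intervalIntegral.integral_of_le zero_le_one,
    setIntegral_eq_of_subset_of_forall_sdiff_eq_zero measurableSet_Ioi Ioc_subset_Ioi_self]
  rintro t ⟨ht, ht'⟩
  exact hv t (le_of_lt (by simpa [mem_Ioi.mp ht] using ht'))

lemma Antitone.lowerSum_le_integral_Ioi (hh : Antitone h) (hv : ∀ t, 1 ≤ t → h t = 0)
    {m : ℕ} (hm : 0 < m) :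
    (m : ℝ)⁻¹ * ∑ i ∈ Finset.range m, h ((i + 1 : ℕ) / m) ≤ ∫ t in Ioi (0 : ℝ), h t := by
  have hmono : Antitone fun s : ℝ => h (s / m) :=
    hh.comp_monotone fun _ _ hst => div_le_div_of_nonneg_right hst (by positivity)
  rw [integral_Ioi_eq_inv_mul_intervalIntegral_div hv hm]
  gcongr
  simpa using (hmono.antitoneOn _).sum_le_integral (x₀ := 0) (a := m)

lemma Antitone.integral_Ioi_le_upperSum (hh : Antitone h) (hv : ∀ t, 1 ≤ t → h t = 0)
    {m : ℕ} (hm : 0 < m) :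
    ∫ t in Ioi (0 : ℝ), h t ≤ (m : ℝ)⁻¹ * ∑ i ∈ Finset.range m, h (i / m) := by
  have hmono : Antitone fun s : ℝ => h (s / m) :=
    hh.comp_monotone fun _ _ hst => div_le_div_of_nonneg_right hst (by positivity)
  rw [integral_Ioi_eq_inv_mul_intervalIntegral_div hv hm]
  gcongr
  simpa using (hmono.antitoneOn _).integral_le_sum (x₀ := 0) (a := m)

lemma upperSum_sub_lowerSum (hv : ∀ t, 1 ≤ t → h t = 0) {m : ℕ} (hm : 0 < m) :
    (m : ℝ)⁻¹ * ∑ i ∈ Finset.range m, h (i / m)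
      = (m : ℝ)⁻¹ * ∑ i ∈ Finset.range m, h ((i + 1 : ℕ) / m) + (m : ℝ)⁻¹ * h 0 := by
  have := Finset.sum_range_sub' (fun i : ℕ => h (i / m)) m
  rw [Finset.sum_sub_distrib, div_self (by positivity), hv 1 le_rfl] at this
  simp only [Nat.cast_zero, zero_div, sub_zero] at this
  rw [← mul_add, ← this]
  ring

lemma tendsto_integral_Ioi_of_antitone {ι : Type*} {l : Filter ι} {g : ι → ℝ → ℝ}
    (hg : ∀ i, Antitone (g i)) (hgv : ∀ i t, 1 ≤ t → g i t = 0)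
    (hh : Antitone h) (hv : ∀ t, 1 ≤ t → h t = 0)
    (hlim : ∀ t, Tendsto (fun i => g i t) l (𝓝 (h t))) :
    Tendsto (fun i => ∫ t in Ioi (0 : ℝ), g i t) l (𝓝 (∫ t in Ioi (0 : ℝ), h t)) := by
  rw [Metric.tendsto_nhds]
  intro ε hε
  have h0 : 0 ≤ h 0 := (hv 1 le_rfl).symm.trans_le (hh zero_le_one)
  obtain ⟨m, hm⟩ := exists_nat_gt (2 * h 0 / ε)
  have hm0 : 0 < m := by exact_mod_cast (by positivity : 0 ≤ 2 * h 0 / ε).trans_lt hm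
  have hgap : (m : ℝ)⁻¹ * h 0 < ε / 2 := by
    rw [div_lt_iff₀ hε] at hm
    rw [inv_mul_lt_iff₀ (by positivity)]
    linarith
  have hsum (s : ℕ → ℝ) : Tendsto (fun i => (m : ℝ)⁻¹ * ∑ k ∈ Finset.range m, g i (s k)) l
      (𝓝 ((m : ℝ)⁻¹ * ∑ k ∈ Finset.range m, h (s k))) :=
    (tendsto_finsetSum _ fun k _ => hlim (s k)).const_mul _
  filter_upwards [(hsum fun k => k / m).eventually_lt_const (lt_add_of_pos_right _ (half_pos hε)),
    (hsum fun k => (k + 1 : ℕ) / m).eventually_const_lt (sub_lt_self _ (half_pos hε))]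
    with i hup hlow
  have := upperSum_sub_lowerSum hv hm0
  have := (hg i).lowerSum_le_integral_Ioi (hgv i) hm0
  have := (hg i).integral_Ioi_le_upperSum (hgv i) hm0
  have := hh.lowerSum_le_integral_Ioi hv hm0
  have := hh.integral_Ioi_le_upperSum hv hm0
  rw [Real.dist_eq, abs_sub_lt_iff]
  constructor <;> linarith

end RiemannSums

lemma Set.symmDiff_subset_iUnion_symmDiff_succ {α : Type*} (u : ℕ → Set α) (n k : ℕ) :
    u n ∆ u (n + k) ⊆ ⋃ j, u (n + j) ∆ u (n + j + 1) := by
  induction k with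
  | zero => simp only [add_zero, symmDiff_self, bot_eq_empty, empty_subset]
  | succ k ih =>
    refine (symmDiff_triangle _ (u (n + k)) _).trans (union_subset ih ?_)
    exact subset_iUnion_of_subset k subset_rfl

namespace MeasureTheory.MeasuredSets

variable {X : Type*} [MeasurableSpace X]

instance {lam : Measure X} : CompleteSpace (MeasuredSets lam) := by
  refine EMetric.complete_of_convergent_controlled_sequences (fun n => 2⁻¹ ^ n)
    (fun n => ENNReal.pow_pos (by norm_num) n) fun u hu => ?_
  let T : Set X := ⋂ N, ⋃ k, (u (N + k) : Set X)
  have hT : MeasurableSet T := .iInter fun N => .iUnion fun k => (u (N + k)).2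
  have hsub (n : ℕ) : (u n : Set X) ∆ T ⊆ ⋃ j, (u (n + j) : Set X) ∆ u (n + j + 1) := by
    refine Subset.trans ?_ (iUnion_subset fun k =>
      symmDiff_subset_iUnion_symmDiff_succ (fun i => (u i : Set X)) n k)
    rintro x (⟨hxn, hxT⟩ | ⟨hxT, hxn⟩)
    · obtain ⟨N, hN⟩ : ∃ N, ∀ k, x ∉ (u (N + k) : Set X) := by simpa [T] using hxT
      exact mem_iUnion.2 ⟨N, Or.inl ⟨hxn, by simpa [add_comm] using hN n⟩⟩
    · obtain ⟨k, hk⟩ := mem_iUnion.1 (mem_iInter.1 hxT n)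
      exact mem_iUnion.2 ⟨k, Or.inr ⟨hk, hxn⟩⟩
  have hbound (n : ℕ) : edist (u n) ⟨T, hT⟩ ≤ 2⁻¹ ^ n * 2 := calc
    lam ((u n : Set X) ∆ T) ≤ ∑' j, lam ((u (n + j) : Set X) ∆ u (n + j + 1)) :=
      (measure_mono (hsub n)).trans (measure_iUnion_le _)
    _ ≤ ∑' j, 2⁻¹ ^ (n + j) := ENNReal.tsum_le_tsum fun j => (hu _ _ _ le_rfl (by omega)).le
    _ = 2⁻¹ ^ n * 2 := by
      simp_rw [pow_add, ENNReal.tsum_mul_left, ENNReal.tsum_geometric, ENNReal.one_sub_inv_two,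
        inv_inv]
  refine ⟨⟨T, hT⟩, tendsto_iff_edist_tendsto_0.2 ?_⟩
  refine tendsto_of_tendsto_of_tendsto_of_le_of_le tendsto_const_nhds ?_ (fun _ => bot_le) hbound
  simpa using ENNReal.Tendsto.mul_const
    (ENNReal.tendsto_pow_atTop_nhds_zero_of_lt_one (by norm_num : (2⁻¹ : ℝ≥0∞) < 1))
    (Or.inr ENNReal.ofNat_ne_top)

lemma lipschitzWith_measureReal_of_le_smul {lam σ : Measure X} [IsFiniteMeasure lam]
    [IsFiniteMeasure σ] {c : ℝ≥0} (h : σ ≤ c • lam) :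
    LipschitzWith c fun s : MeasuredSets lam => σ.real s := by
  refine LipschitzWith.of_dist_le_mul fun s t => ?_
  rw [Real.dist_eq, MeasuredSets.dist_def]
  refine (abs_measureReal_sub_le_measureReal_symmDiff s.2.nullMeasurableSet
    t.2.nullMeasurableSet).trans ?_
  rw [measureReal_def, measureReal_def, ← ENNReal.coe_toReal, ← ENNReal.toReal_mul]
  exact ENNReal.toReal_mono (by finiteness) (h _)

end MeasureTheory.MeasuredSets

lemma exists_isOpen_forall_dist_le_of_cauchySeq {Y : Type*} [TopologicalSpace Y] [BaireSpace Y]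
    [Nonempty Y] {f : ℕ → Y → ℝ} (hf : ∀ n, Continuous (f n))
    (hcauchy : ∀ y, CauchySeq fun n => f n y) {ε : ℝ} (hε : 0 < ε) :
    ∃ N, ∃ V : Set Y, IsOpen V ∧ V.Nonempty ∧
      ∀ y ∈ V, ∀ a ≥ N, ∀ b ≥ N, dist (f a y) (f b y) ≤ ε := by
  let H (N : ℕ) : Set Y := {y | ∀ a ≥ N, ∀ b ≥ N, dist (f a y) (f b y) ≤ ε}
  have hclosed (N : ℕ) : IsClosed (H N) := by
    simp only [H, ofPred_forall]
    exact isClosed_iInter fun a => isClosed_iInter fun _ => isClosed_iInter fun b =>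
      isClosed_iInter fun _ => isClosed_le ((hf a).dist (hf b)) continuous_const
  have hcover : ⋃ N, H N = univ := eq_univ_of_forall fun y => by
    obtain ⟨N, hN⟩ := Metric.cauchySeq_iff.1 (hcauchy y) ε hε
    exact mem_iUnion.2 ⟨N, fun a ha b hb => (hN a ha b hb).le⟩
  obtain ⟨N, hN⟩ := nonempty_interior_of_iUnion_of_closed hclosed hcover
  exact ⟨N, interior (H N), isOpen_interior, hN, fun y hy => interior_subset hy⟩

section Nikodym

variable {X : Type*} [MeasurableSpace X]

lemma exists_isFiniteMeasure_le_smul (σ : ℕ → Measure X) [∀ n, IsProbabilityMeasure (σ n)] :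
    ∃ lam : Measure X, IsFiniteMeasure lam ∧ ∃ c : ℕ → ℝ≥0, ∀ n, σ n ≤ c n • lam := by
  refine ⟨Measure.sum fun n => (2⁻¹ : ℝ≥0∞) ^ n • σ n, ⟨?_⟩, fun n => 2 ^ n, fun n => ?_⟩
  · simp [ENNReal.tsum_geometric, ENNReal.one_sub_inv_two]
  · refine Measure.le_iff'.2 fun s => ?_
    calc σ n s = 2 ^ n * ((2⁻¹ : ℝ≥0∞) ^ n * σ n s) := by
          rw [← mul_assoc, ← mul_pow, ENNReal.mul_inv_cancel two_ne_zero ENNReal.ofNat_ne_top,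
            one_pow, one_mul]
      _ ≤ 2 ^ n * (Measure.sum fun n => (2⁻¹ : ℝ≥0∞) ^ n • σ n) s := by
          gcongr
          exact (ENNReal.le_tsum n).trans (Measure.le_sum_apply _ s)
      _ = _ := by simp

variable {σ : ℕ → Measure X} [∀ n, IsProbabilityMeasure (σ n)] {ν : Set X → ℝ}

lemma tendsto_zero_of_tendsto_measureReal_of_antitone
    (hν : ∀ s, MeasurableSet s → Tendsto (fun n => (σ n).real s) atTop (𝓝 (ν s)))
    {F : ℕ → Set X} (hFm : ∀ j, MeasurableSet (F j)) (hFa : Antitone F) (hF : ⋂ j, F j = ∅) :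
    Tendsto (fun j => ν (F j)) atTop (𝓝 0) := by
  obtain ⟨lam, _, c, hc⟩ := exists_isFiniteMeasure_le_smul σ
  have hF0 (ρ : Measure X) [IsFiniteMeasure ρ] : Tendsto (fun j => ρ.real (F j)) atTop (𝓝 0) := by
    have := tendsto_measure_iInter_atTop (μ := ρ) (fun j => (hFm j).nullMeasurableSet) hFa
      ⟨0, measure_ne_top ρ _⟩
    rw [hF, measure_empty] at this
    exact (ENNReal.tendsto_toReal ENNReal.zero_ne_top).comp this
  have : Nonempty (MeasuredSets lam) := ⟨⟨∅, .empty⟩⟩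
  rw [Metric.tendsto_atTop]
  intro ε hε
  obtain ⟨N, V, hVo, ⟨s₀, hs₀⟩, hV⟩ := exists_isOpen_forall_dist_le_of_cauchySeq
    (fun n => (MeasuredSets.lipschitzWith_measureReal_of_le_smul (hc n)).continuous)
    (fun s : MeasuredSets lam => (hν s s.2).cauchySeq) (by positivity : 0 < ε / 3)
  obtain ⟨δ, hδ, hball⟩ := Metric.isOpen_iff.1 hVo s₀ hs₀
  -- `s₀ ∪ G` and `s₀ \ G` lie in `V` when `G` is small, and `σ n G` is their difference.
  have hsmall (G : Set X) (hG : MeasurableSet G) (hGδ : lam.real G < δ) (n : ℕ) (hn : N ≤ n) :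
      (σ n).real G ≤ (σ N).real G + 2 * (ε / 3) := by
    have hs₀m : MeasurableSet (s₀ : Set X) := s₀.2
    let A : MeasuredSets lam := ⟨s₀ ∪ G, hs₀m.union hG⟩
    let B : MeasuredSets lam := ⟨s₀ \ G, hs₀m.diff hG⟩
    have hA : A ∈ V := hball <| by
      rw [Metric.mem_ball, MeasuredSets.dist_def]
      refine lt_of_le_of_lt (measureReal_mono fun x hx => ?_) hGδ
      rcases hx with ⟨hx | hx, hx'⟩ | ⟨hx, hx'⟩
      exacts [absurd hx hx', hx, absurd (Or.inl hx) hx']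
    have hB : B ∈ V := hball <| by
      rw [Metric.mem_ball, MeasuredSets.dist_def]
      refine lt_of_le_of_lt (measureReal_mono fun x hx => ?_) hGδ
      rcases hx with ⟨hx, hx'⟩ | ⟨hx, hx'⟩
      exacts [absurd hx.1 hx', not_not.1 fun hxG => hx' ⟨hx, hxG⟩]
    have hsplit (m : ℕ) : (σ m).real A = (σ m).real B + (σ m).real G := by
      change (σ m).real ((s₀ : Set X) ∪ G) = (σ m).real ((s₀ : Set X) \ G) + (σ m).real G
      rw [← measureReal_union disjoint_sdiff_left hG, sdiff_union_self]
    have hAN := hV A hA n hn N le_rfl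
    have hBN := hV B hB n hn N le_rfl
    rw [Real.dist_eq, abs_le, hsplit, hsplit] at hAN
    rw [Real.dist_eq, abs_le] at hBN
    linarith [hAN.2, hBN.1]
  obtain ⟨j₀, hj₀⟩ := ((hF0 lam).eventually (gt_mem_nhds hδ)).and
    ((hF0 (σ N)).eventually (gt_mem_nhds (by positivity : 0 < ε / 3))) |>.exists_forall_of_atTop
  refine ⟨j₀, fun j hj => ?_⟩
  have hupper : ν (F j) ≤ (σ N).real (F j) + 2 * (ε / 3) :=
    le_of_tendsto (hν _ (hFm j)) (eventually_atTop.2 ⟨N, hsmall _ (hFm j) (hj₀ j hj).1⟩)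
  have hlower : 0 ≤ ν (F j) :=
    ge_of_tendsto' (hν _ (hFm j)) fun _ => measureReal_nonneg
  rw [Real.dist_eq, sub_zero, abs_of_nonneg hlower]
  linarith [(hj₀ j hj).2]

/-- Nikodym's convergence theorem, for probability measures. -/
theorem isCtblAdd_of_tendsto_measureReal
    (hν : ∀ s, MeasurableSet s → Tendsto (fun n => (σ n).real s) atTop (𝓝 (ν s))) :
    IsCtblAdd ν := by
  intro E hE hdisj
  let F (j : ℕ) : Set X := (⋃ n, E n) \ ⋃ k ∈ Finset.range j, E k
  have hUm : MeasurableSet (⋃ n, E n) := .iUnion hE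
  have hPm (j : ℕ) : MeasurableSet (⋃ k ∈ Finset.range j, E k) :=
    Finset.measurableSet_biUnion _ fun k _ => hE k
  have hFm (j : ℕ) : MeasurableSet (F j) := hUm.diff (hPm j)
  have hsplit (m j : ℕ) : (σ m).real (⋃ n, E n)
      = ∑ k ∈ Finset.range j, (σ m).real (E k) + (σ m).real (F j) := by
    rw [measureReal_sdiff (iUnion₂_subset fun k _ => subset_iUnion E k) (hPm j),
      measureReal_biUnion_finset (fun k _ l _ hkl => hdisj hkl) fun k _ => hE k]
    ring
  have hlim (j : ℕ) : ν (⋃ n, E n) = ∑ k ∈ Finset.range j, ν (E k) + ν (F j) :=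
    tendsto_nhds_unique (hν _ hUm) <| by
      simpa only [hsplit _ j] using
        (tendsto_finsetSum (Finset.range j) fun k _ => hν _ (hE k)).add (hν _ (hFm j))
  have hFa : Antitone F := fun i j hij =>
    sdiff_subset_sdiff_right (biUnion_subset_biUnion_left (by simpa using hij))
  have hF : ⋂ j, F j = ∅ := by
    refine eq_empty_of_forall_notMem fun x hx => ?_
    obtain ⟨k, hk⟩ := mem_iUnion.1 (mem_iInter.1 hx 0).1
    exact (mem_iInter.1 hx (k + 1)).2 (mem_biUnion (by simp) hk)
  rw [hasSum_iff_tendsto_nat_of_nonneg fun k => ge_of_tendsto' (hν _ (hE k))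
    fun _ => measureReal_nonneg]
  simpa [fun j => eq_sub_of_add_eq (hlim j).symm] using
    (tendsto_zero_of_tendsto_measureReal_of_antitone hν hFm hFa hF).const_sub (ν (⋃ n, E n))

end Nikodym

namespace IsTransFun

variable {X : Type*} [MeasurableSpace X] {p : X → Set X → ℝ}

noncomputable def toKernel (hp : IsTransFun p) : Kernel X X where
  toFun x := Measure.ofMeasurable (fun E _ => ENNReal.ofReal (p x E))
    (by simp [(hp.2.2.2 x).1.1])
    (fun E hEm hEd => by
      rw [← ((hp.2.2.2 x).2 E hEm hEd).tsum_eq,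
        ENNReal.ofReal_tsum_of_nonneg (fun n => (hp.1 x (E n) (hEm n)).1)
          ((hp.2.2.2 x).2 E hEm hEd).summable])
  measurable' := Measure.measurable_of_measurable_coe _ fun E hE => by
    simp_rw [Measure.ofMeasurable_apply E hE]
    exact (hp.2.2.1 E hE).ennreal_ofReal

variable (hp : IsTransFun p)

lemma toKernel_apply (x : X) {E : Set X} (hE : MeasurableSet E) :
    hp.toKernel x E = ENNReal.ofReal (p x E) := by
  rw [toKernel, Kernel.coe_mk, Measure.ofMeasurable_apply E hE]

lemma toKernel_real_apply (x : X) {E : Set X} (hE : MeasurableSet E) :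
    (hp.toKernel x).real E = p x E := by
  rw [measureReal_def, toKernel_apply hp x hE, ENNReal.toReal_ofReal (hp.1 x E hE).1]

instance isMarkovKernel_toKernel : IsMarkovKernel hp.toKernel where
  isProbabilityMeasure x := ⟨by rw [toKernel_apply hp x .univ, hp.2.1 x, ENNReal.ofReal_one]⟩

end IsTransFun

section LayerCake

variable {X : Type*} [MeasurableSpace X]

lemma faIntegral_eq_integral_Ioi {ν : Set X → ℝ} (hν : ν ∅ = 0) {f : X → ℝ} (hf : ∀ x, 0 ≤ f x) :
    faIntegral ν f = ∫ t in Ioi (0 : ℝ), ν {x | t < f x} := by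
  have hneg (t : ℝ) (ht : t ∈ Ioi 0) : ν {x | f x < -t} = 0 := by
    have : {x | f x < -t} = ∅ := eq_empty_of_forall_notMem fun x (hx : f x < -t) =>
      (hf x).not_gt (hx.trans (neg_neg_iff_pos.2 ht))
    rw [this, hν]
  rw [faIntegral, setIntegral_congr_fun measurableSet_Ioi hneg]
  simp

lemma IsTransFun.integral_Ioi_measureReal_lt_eq {p : X → Set X → ℝ} (hp : IsTransFun p)
    (ρ : Measure X) [IsFiniteMeasure ρ] {E : Set X} (hE : MeasurableSet E) :
    ∫ t in Ioi (0 : ℝ), ρ.real {x | t < p x E} = (hp.toKernel ∘ₘ ρ).real E := by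
  rw [← (Integrable.of_mem_Icc 0 1 (hp.2.2.1 E hE).aemeasurable
      (ae_of_all _ fun x => hp.1 x E hE)).integral_eq_integral_meas_lt
      (ae_of_all _ fun x => (hp.1 x E hE).1),
    measureReal_def, Measure.bind_apply hE (Kernel.aemeasurable _),
    ← integral_toReal (Kernel.measurable_coe _ hE).aemeasurable
      (ae_of_all _ fun x => measure_lt_top _ _)]
  exact integral_congr_ae (ae_of_all _ fun x => (hp.toKernel_real_apply x hE).symm)

end LayerCake

section SetwiseLimit

variable {X : Type*} [MeasurableSpace X] {ι : Type*} {l : Filter ι} [l.NeBot]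
  {σ : ι → Measure X} [∀ i, IsProbabilityMeasure (σ i)] {ν : Set X → ℝ}

lemma isFinAdd_of_tendsto_measureReal
    (hν : ∀ s, MeasurableSet s → Tendsto (fun i => (σ i).real s) l (𝓝 (ν s))) :
    IsFinAdd ν :=
  ⟨tendsto_nhds_unique (hν ∅ .empty) (by simp),
    fun E F hE hF hEF => tendsto_nhds_unique (hν _ (hE.union hF)) <|
      ((hν E hE).add (hν F hF)).congr fun i => (measureReal_union hEF hF).symm⟩

lemma le_of_tendsto_measureReal_of_subset
    (hν : ∀ s, MeasurableSet s → Tendsto (fun i => (σ i).real s) l (𝓝 (ν s)))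
    {s t : Set X} (hs : MeasurableSet s) (ht : MeasurableSet t) (hst : s ⊆ t) : ν s ≤ ν t :=
  le_of_tendsto_of_tendsto' (hν s hs) (hν t ht) fun _ => measureReal_mono hst

lemma IsTransFun.markovOp_eq_of_tendsto_measureReal {p : X → Set X → ℝ} (hp : IsTransFun p)
    (hν : ∀ s, MeasurableSet s → Tendsto (fun i => (σ i).real s) l (𝓝 (ν s)))
    (happrox : ∀ E, MeasurableSet E →
      Tendsto (fun i => (hp.toKernel ∘ₘ σ i).real E - (σ i).real E) l (𝓝 0))
    {E : Set X} (hE : MeasurableSet E) : markovOp p ν E = ν E := by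
  have hlev (t : ℝ) : MeasurableSet {x | t < p x E} :=
    measurableSet_lt measurable_const (hp.2.2.1 E hE)
  have hmono {s t : ℝ} (hst : s ≤ t) : {x | t < p x E} ⊆ {x | s < p x E} :=
    fun _ hx => hst.trans_lt hx
  have hempty (t : ℝ) (ht : 1 ≤ t) : {x | t < p x E} = ∅ :=
    eq_empty_of_forall_notMem fun x (hx : t < p x E) => ((hp.1 x E hE).2.trans ht).not_gt hx
  have hν0 : ν ∅ = 0 := (isFinAdd_of_tendsto_measureReal hν).1
  have hint : Tendsto (fun i => ∫ t in Ioi (0 : ℝ), (σ i).real {x | t < p x E}) l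
      (𝓝 (∫ t in Ioi (0 : ℝ), ν {x | t < p x E})) :=
    tendsto_integral_Ioi_of_antitone
      (fun i _ _ hst => measureReal_mono (hmono hst))
      (fun i t ht => by rw [hempty t ht, measureReal_empty])
      (fun _ _ hst => le_of_tendsto_measureReal_of_subset hν (hlev _) (hlev _) (hmono hst))
      (fun t ht => by rw [hempty t ht, hν0]) fun t => hν _ (hlev t)
  have hcomp : Tendsto (fun i => (hp.toKernel ∘ₘ σ i).real E) l (𝓝 (ν E)) := by
    simpa using (happrox E hE).add (hν E hE)
  rw [markovOp, faIntegral_eq_integral_Ioi hν0 fun x => (hp.1 x E hE).1]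
  exact tendsto_nhds_unique (hint.congr fun i => hp.integral_Ioi_measureReal_lt_eq _ hE) hcomp

lemma IsTransFun.mem_invProbSet_of_tendsto_measureReal {p : X → Set X → ℝ} (hp : IsTransFun p)
    (hν : ∀ s, MeasurableSet s → Tendsto (fun i => (σ i).real s) l (𝓝 (ν s)))
    (happrox : ∀ E, MeasurableSet E →
      Tendsto (fun i => (hp.toKernel ∘ₘ σ i).real E - (σ i).real E) l (𝓝 0)) :
    ν ∈ InvProbSet p :=
  ⟨isFinAdd_of_tendsto_measureReal hν,
    fun s hs => ge_of_tendsto' (hν s hs) fun _ => measureReal_nonneg,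
    tendsto_nhds_unique (hν _ .univ) (by simp),
    fun _ => hp.markovOp_eq_of_tendsto_measureReal hν happrox⟩

end SetwiseLimit

lemma MeasureTheory.Measure.comp_finsetSum {X Y ι : Type*} [MeasurableSpace X]
    [MeasurableSpace Y] (κ : Kernel X Y) (s : Finset ι) (μ : ι → Measure X) :
    κ ∘ₘ ∑ i ∈ s, μ i = ∑ i ∈ s, κ ∘ₘ μ i := by
  classical
  induction s using Finset.induction_on with
  | empty => simp [Measure.bind_zero_left]
  | insert a s ha ih => rw [Finset.sum_insert ha, Finset.sum_insert ha, Measure.comp_add, ih]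

section Cesaro

variable {X : Type*} [MeasurableSpace X]

lemma measureReal_smul_inv_sum_range (μ : ℕ → Measure X) [∀ k, IsFiniteMeasure (μ k)] (n : ℕ)
    (s : Set X) :
    ((((n : ℝ≥0∞) + 1)⁻¹ • ∑ k ∈ Finset.range (n + 1), μ k).real s)
      = ((n : ℝ) + 1)⁻¹ * ∑ k ∈ Finset.range (n + 1), (μ k).real s := by
  rw [measureReal_ennreal_smul_apply, measureReal_def, Measure.coe_finsetSum, Finset.sum_apply,
    ENNReal.toReal_sum fun k _ => measure_ne_top _ _, ENNReal.toReal_inv]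
  simp [measureReal_def, ENNReal.toReal_add]

variable (κ : Kernel X X) (ρ : Measure X)

noncomputable def cesaroComp (n : ℕ) : Measure X :=
  ((n : ℝ≥0∞) + 1)⁻¹ • ∑ k ∈ Finset.range (n + 1), (fun μ => κ ∘ₘ μ)^[k] ρ

lemma comp_cesaroComp (n : ℕ) :
    κ ∘ₘ cesaroComp κ ρ n
      = ((n : ℝ≥0∞) + 1)⁻¹ • ∑ k ∈ Finset.range (n + 1), (fun μ => κ ∘ₘ μ)^[k + 1] ρ := by
  simp only [cesaroComp, Measure.comp_smul, Measure.comp_finsetSum, iterate_succ_apply']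

variable [IsMarkovKernel κ] [IsProbabilityMeasure ρ]

instance isProbabilityMeasure_iterate_comp (k : ℕ) :
    IsProbabilityMeasure ((fun μ => κ ∘ₘ μ)^[k] ρ) := by
  induction k with
  | zero => simpa
  | succ k ih => rw [iterate_succ_apply']; infer_instance

instance isProbabilityMeasure_cesaroComp (n : ℕ) : IsProbabilityMeasure (cesaroComp κ ρ n) := by
  refine ⟨?_⟩
  simp only [cesaroComp, Measure.smul_apply, Measure.coe_finsetSum, Finset.sum_apply,
    measure_univ, Finset.sum_const, Finset.card_range, nsmul_eq_mul, mul_one, smul_eq_mul]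
  push_cast
  exact ENNReal.inv_mul_cancel (by simp) (by simp)

lemma tendsto_comp_cesaroComp_sub (s : Set X) :
    Tendsto (fun n => (κ ∘ₘ cesaroComp κ ρ n).real s - (cesaroComp κ ρ n).real s) atTop
      (𝓝 0) := by
  let a (k : ℕ) : ℝ := ((fun μ => κ ∘ₘ μ)^[k] ρ).real s
  have hdiff (n : ℕ) : (κ ∘ₘ cesaroComp κ ρ n).real s - (cesaroComp κ ρ n).real s
      = ((n : ℝ) + 1)⁻¹ * (a (n + 1) - a 0) := by
    rw [comp_cesaroComp, cesaroComp, measureReal_smul_inv_sum_range,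
      measureReal_smul_inv_sum_range, ← mul_sub, ← Finset.sum_sub_distrib,
      Finset.sum_range_sub (f := a)]
  refine squeeze_zero_norm (fun n => ?_) tendsto_one_div_add_atTop_nhds_zero_nat
  rw [hdiff, norm_mul, norm_inv, Real.norm_eq_abs, Real.norm_eq_abs, abs_of_pos (by positivity),
    one_div]
  have ha (k : ℕ) : a k ∈ Icc (0 : ℝ) 1 := ⟨measureReal_nonneg, measureReal_le_one⟩
  refine mul_le_of_le_one_right (by positivity) (abs_sub_le_iff.2 ⟨?_, ?_⟩) <;>
    linarith [(ha 0).1, (ha 0).2, (ha (n + 1)).1, (ha (n + 1)).2]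

end Cesaro

lemma exists_tendsto_ultrafilter_measureReal {X ι : Type*} [MeasurableSpace X]
    (U : Ultrafilter ι) (σ : ι → Measure X) [∀ i, IsProbabilityMeasure (σ i)] :
    ∃ ν : Set X → ℝ, ∀ s, Tendsto (fun i => (σ i).real s) U (𝓝 (ν s)) := by
  choose ν _ hν using fun s => isCompact_Icc.ultrafilter_le_nhds
    (U.map fun i => (σ i).real s) (le_principal_iff.2 <| Ultrafilter.mem_map.2 <|
      univ_mem' fun _ => ⟨measureReal_nonneg, measureReal_le_one⟩ : _ ≤ 𝓟 (Icc (0 : ℝ) 1))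
  exact ⟨ν, hν⟩

lemma IsTransFun.tendsto_cesaroComp_of_invProbSet_eq_singleton {X : Type*} [MeasurableSpace X]
    {p : X → Set X → ℝ} (hp : IsTransFun p) {μ : Set X → ℝ} (huniq : InvProbSet p = {μ})
    (ρ : Measure X) [IsProbabilityMeasure ρ] (s : Set X) :
    Tendsto (fun n => (cesaroComp hp.toKernel ρ n).real s) atTop (𝓝 (μ s)) := by
  refine tendsto_iff_ultrafilter _ _ _ |>.2 fun U hU => ?_
  obtain ⟨ν, hν⟩ := exists_tendsto_ultrafilter_measureReal U (cesaroComp hp.toKernel ρ)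
  have hmem : ν ∈ InvProbSet p := hp.mem_invProbSet_of_tendsto_measureReal
    (fun s _ => hν s) fun E _ => (tendsto_comp_cesaroComp_sub hp.toKernel ρ E).mono_left hU
  rw [huniq, mem_singleton_iff] at hmem
  exact hmem ▸ hν s

theorem theorem8_3_general {X : Type*} [MeasurableSpace X]
    (p : X → Set X → ℝ) (hp : IsTransFun p)
    (μ : Set X → ℝ) (huniq : InvProbSet p = {μ}) :
    IsCtblAdd μ := by
  obtain ⟨hfa, -, huniv, -⟩ : μ ∈ InvProbSet p := huniq ▸ rfl
  obtain ⟨x₀⟩ : Nonempty X := by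
    by_contra h
    rw [not_nonempty_iff, ← univ_eq_empty_iff] at h
    rw [h, hfa.1] at huniv
    exact zero_ne_one huniv
  exact isCtblAdd_of_tendsto_measureReal fun s _ =>
    hp.tendsto_cesaroComp_of_invProbSet_eq_singleton huniq (Measure.dirac x₀) s

/-- Theorem 8.3 of [4]: if the Markov chain has exactly one invariant finitely additive
probability measure, then it is countably additive. -/
theorem theorem8_3 {X : Type*} [MeasurableSpace X]
    (hsingl : ∀ x : X, MeasurableSet ({x} : Set X))
    (p : X → Set X → ℝ) (hp : IsTransFun p)
    (μ : Set X → ℝ) (huniq : InvProbSet p = {μ}) :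
    IsCtblAdd μ :=
  theorem8_3_general p hp μ huniq
end

section
/- Theorem of Šidak (invariance of the Yosida–Hewitt components): Let a countably additive transition function p on a measurable space (X,Σ) be given, with Markov operator A on ba(X,Σ). If a finitely additive measure μ ≥ 0 satisfies Aμ = μ and μ = μ₁ + μ₂ is its Yosida–Hewitt decomposition into a countably additive part μ₁ and a purely finitely additive part μ₂, then Aμ₁ = μ₁ and Aμ₂ = μ₂. -/
open MeasureTheory Set Filter Topology Function

/-!
A countably additive `μ₁ ≥ 0` is a finite measure, and then `Aμ₁` is the composition of that
measure with the Markov kernel `p`, again a finite measure. Positivity and additivity of `A`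
give `Aμ₁ ≤ Aμ = μ₁ + μ₂`, so the positive part of `Aμ₁ - μ₁` (from its Hahn decomposition) is
a countably additive minorant of `μ₂`, hence zero. Thus `Aμ₁ ≤ μ₁`; both have the same total
mass, so `Aμ₁ = μ₁`, and `Aμ₂ = Aμ - Aμ₁ = μ - μ₁ = μ₂`.
-/

open ProbabilityTheory

section

variable {X : Type*} [MeasurableSpace X]

lemma IsFinAdd.empty {μ : Set X → ℝ} (hμ : IsFinAdd μ) : μ ∅ = 0 :=
  hμ.1

lemma IsFinAdd.mono {μ : Set X → ℝ} (hμ : IsFinAdd μ) (hpos : IsNonnegSF μ)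
    {E F : Set X} (hE : MeasurableSet E) (hF : MeasurableSet F) (hFE : F ⊆ E) :
    μ F ≤ μ E := by
  have hsplit := hμ.2 F (E \ F) hF (hE.diff hF) disjoint_sdiff_self_right
  rw [union_sdiff_cancel hFE] at hsplit
  linarith [hpos (E \ F) (hE.diff hF)]

lemma MeasureTheory.VectorMeasure.isFinAdd (s : SignedMeasure X) : IsFinAdd s :=
  ⟨s.empty, fun _ _ hE hF hEF => s.of_union hEF hE hF⟩

lemma MeasureTheory.VectorMeasure.isCtblAdd (s : SignedMeasure X) : IsCtblAdd s :=
  fun _ hE hd => s.hasSum_of_disjoint_iUnion hE hd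

section faIntegral

variable {μ ν : Set X → ℝ} {f : X → ℝ}

lemma faIntegral_congr (h : ∀ E, MeasurableSet E → μ E = ν E) (hf : Measurable f) :
    faIntegral μ f = faIntegral ν f := by
  unfold faIntegral
  simp only [h _ (measurableSet_lt measurable_const hf),
    h _ (measurableSet_lt hf measurable_const)]

lemma faIntegral_of_nonneg (h0 : μ ∅ = 0) (hf : 0 ≤ f) :
    faIntegral μ f = ∫ t in Ioi 0, μ {x | t < f x} := by
  have hneg : ∀ t ∈ Ioi (0 : ℝ), μ {x | f x < -t} = 0 := fun t ht => by
    rw [show {x | f x < -t} = ∅ from eq_empty_of_forall_notMem fun x hx =>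
      (hf x).not_gt (hx.trans (neg_neg_of_pos ht)), h0]
  rw [faIntegral, setIntegral_congr_fun measurableSet_Ioi hneg, integral_zero, sub_zero]

lemma IsFinAdd.integrableOn_Ioi_superlevel (hμ : IsFinAdd μ) (hpos : IsNonnegSF μ)
    (hf : Measurable f) {C : ℝ} (hC : ∀ x, f x ≤ C) :
    IntegrableOn (fun t => μ {x | t < f x}) (Ioi 0) := by
  have hanti : Antitone fun t => μ {x | t < f x} := fun s t hst =>
    hμ.mono hpos (measurableSet_lt measurable_const hf) (measurableSet_lt measurable_const hf)
      fun x hx => hst.trans_lt hx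
  have hzero : EqOn (fun t => μ {x | t < f x}) 0 (Ioi C) := fun t ht => by
    change μ _ = 0
    rw [show {x | t < f x} = ∅ from eq_empty_of_forall_notMem fun x hx =>
      (hC x).not_gt (ht.trans hx), hμ.empty]
  have hbelow : IntegrableOn (fun t => μ {x | t < f x}) (Icc 0 C) :=
    hanti.antitoneOn _ |>.integrableOn_isCompact isCompact_Icc
  have habove : IntegrableOn (fun t => μ {x | t < f x}) (Ioi C) :=
    (integrableOn_congr_fun hzero measurableSet_Ioi).mpr integrableOn_zero
  exact (hbelow.union habove).mono_set fun t ht =>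
    (le_or_gt t C).imp (fun htC => ⟨le_of_lt ht, htC⟩) id

lemma faIntegral_nonneg (h0 : μ ∅ = 0) (hpos : IsNonnegSF μ) (hf : Measurable f)
    (hf0 : 0 ≤ f) : 0 ≤ faIntegral μ f := by
  rw [faIntegral_of_nonneg h0 hf0]
  exact setIntegral_nonneg measurableSet_Ioi fun t _ =>
    hpos _ (measurableSet_lt measurable_const hf)

lemma faIntegral_add (hμ : IsFinAdd μ) (hμpos : IsNonnegSF μ) (hν : IsFinAdd ν)
    (hνpos : IsNonnegSF ν) (hf : Measurable f) (hf0 : 0 ≤ f) {C : ℝ} (hC : ∀ x, f x ≤ C) :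
    faIntegral (fun E => μ E + ν E) f = faIntegral μ f + faIntegral ν f := by
  rw [faIntegral_of_nonneg hμ.empty hf0, faIntegral_of_nonneg hν.empty hf0,
    faIntegral_of_nonneg (by simp [hμ.empty, hν.empty]) hf0]
  exact integral_add (hμ.integrableOn_Ioi_superlevel hμpos hf hC)
    (hν.integrableOn_Ioi_superlevel hνpos hf hC)

lemma faIntegral_measureReal (M : Measure X) [IsFiniteMeasure M] (hf : Integrable f M)
    (hf0 : 0 ≤ f) : faIntegral M.real f = ∫ x, f x ∂M := by
  rw [faIntegral_of_nonneg measureReal_empty hf0,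
    hf.integral_eq_integral_meas_lt (Eventually.of_forall hf0)]

end faIntegral

namespace IsCtblAdd

variable {μ : Set X → ℝ} (hca : IsCtblAdd μ) (h0 : μ ∅ = 0) (hpos : IsNonnegSF μ)

noncomputable def toMeasure : Measure X :=
  Measure.ofMeasurable (fun E _ => ENNReal.ofReal (μ E)) (by simp [h0]) fun E hE hd => by
    rw [← (hca E hE hd).tsum_eq,
      ENNReal.ofReal_tsum_of_nonneg (fun n => hpos _ (hE n)) (hca E hE hd).summable]

lemma toMeasure_apply {E : Set X} (hE : MeasurableSet E) :
    hca.toMeasure h0 hpos E = ENNReal.ofReal (μ E) :=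
  Measure.ofMeasurable_apply _ hE

instance : IsFiniteMeasure (hca.toMeasure h0 hpos) :=
  ⟨by simp [toMeasure_apply hca h0 hpos MeasurableSet.univ]⟩

lemma measureReal_toMeasure {E : Set X} (hE : MeasurableSet E) :
    (hca.toMeasure h0 hpos).real E = μ E := by
  rw [measureReal_def, toMeasure_apply hca h0 hpos hE, ENNReal.toReal_ofReal (hpos E hE)]

end IsCtblAdd

namespace IsTransFun

variable {p : X → Set X → ℝ}

lemma nonneg (hp : IsTransFun p) {E : Set X} (hE : MeasurableSet E) (x : X) : 0 ≤ p x E :=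
  (hp.1 x E hE).1

lemma le_one (hp : IsTransFun p) {E : Set X} (hE : MeasurableSet E) (x : X) : p x E ≤ 1 :=
  (hp.1 x E hE).2

lemma measurable_apply (hp : IsTransFun p) {E : Set X} (hE : MeasurableSet E) :
    Measurable fun x => p x E :=
  hp.2.2.1 E hE

lemma isNonnegSF (hp : IsTransFun p) (x : X) : IsNonnegSF (p x) :=
  fun _ hE => hp.nonneg hE x

lemma isFinAdd (hp : IsTransFun p) (x : X) : IsFinAdd (p x) :=
  (hp.2.2.2 x).1

lemma isCtblAdd (hp : IsTransFun p) (x : X) : IsCtblAdd (p x) :=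
  (hp.2.2.2 x).2

lemma apply_univ (hp : IsTransFun p) (x : X) : p x univ = 1 :=
  hp.2.1 x

noncomputable def kernel (hp : IsTransFun p) : Kernel X X where
  toFun x := (hp.isCtblAdd x).toMeasure (hp.isFinAdd x).empty (hp.isNonnegSF x)
  measurable' := Measure.measurable_of_measurable_coe _ fun E hE => by
    simp_rw [(hp.isCtblAdd _).toMeasure_apply _ _ hE]
    exact (hp.measurable_apply hE).ennreal_ofReal

lemma kernel_apply (hp : IsTransFun p) (x : X) {E : Set X} (hE : MeasurableSet E) :
    hp.kernel x E = ENNReal.ofReal (p x E) :=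
  (hp.isCtblAdd x).toMeasure_apply (hp.isFinAdd x).empty (hp.isNonnegSF x) hE

instance (hp : IsTransFun p) : IsMarkovKernel hp.kernel :=
  ⟨fun x => ⟨by
    rw [hp.kernel_apply x MeasurableSet.univ, hp.apply_univ x, ENNReal.ofReal_one]⟩⟩

lemma markovOp_congr (hp : IsTransFun p) {μ ν : Set X → ℝ}
    (h : ∀ E, MeasurableSet E → μ E = ν E) {E : Set X} (hE : MeasurableSet E) :
    markovOp p μ E = markovOp p ν E :=
  faIntegral_congr h (hp.measurable_apply hE)

lemma markovOp_nonneg (hp : IsTransFun p) {μ : Set X → ℝ} (h0 : μ ∅ = 0)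
    (hpos : IsNonnegSF μ) {E : Set X} (hE : MeasurableSet E) : 0 ≤ markovOp p μ E :=
  faIntegral_nonneg h0 hpos (hp.measurable_apply hE) (hp.nonneg hE)

lemma markovOp_add (hp : IsTransFun p) {μ ν : Set X → ℝ} (hμ : IsFinAdd μ)
    (hμpos : IsNonnegSF μ) (hν : IsFinAdd ν) (hνpos : IsNonnegSF ν) {E : Set X}
    (hE : MeasurableSet E) :
    markovOp p (fun F => μ F + ν F) E = markovOp p μ E + markovOp p ν E :=
  faIntegral_add hμ hμpos hν hνpos (hp.measurable_apply hE) (hp.nonneg hE) (hp.le_one hE)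

lemma markovOp_measureReal (hp : IsTransFun p) (M : Measure X) [IsFiniteMeasure M] {E : Set X}
    (hE : MeasurableSet E) : markovOp p M.real E = (hp.kernel ∘ₘ M).real E := by
  have hf := hp.measurable_apply hE
  have hint : Integrable (fun x => p x E) M :=
    Integrable.of_bound hf.aestronglyMeasurable 1 <| Eventually.of_forall fun x => by
      rw [Real.norm_of_nonneg (hp.nonneg hE x)]; exact hp.le_one hE x
  rw [markovOp, faIntegral_measureReal M hint (hp.nonneg hE), measureReal_def,
    Measure.bind_apply hE hp.kernel.aemeasurable,
    ← integral_toReal (hp.kernel.measurable_coe hE).aemeasurable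
      (Eventually.of_forall fun x => measure_lt_top _ _)]
  refine integral_congr_ae (Eventually.of_forall fun x => ?_)
  simp only [hp.kernel_apply x hE, ENNReal.toReal_ofReal (hp.nonneg hE x)]

end IsTransFun

lemma MeasureTheory.Measure.le_of_le_add_isPurelyFinAdd {N M : Measure X} [IsFiniteMeasure N]
    [IsFiniteMeasure M] {ν : Set X → ℝ} (hν : IsFinAdd ν) (hνpos : IsNonnegSF ν)
    (hνpfa : IsPurelyFinAdd ν) (hle : ∀ E, MeasurableSet E → N.real E ≤ M.real E + ν E) :
    N ≤ M := by
  set s := N.toSignedMeasure - M.toSignedMeasure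
  have hs : ∀ E, MeasurableSet E → s E = N.real E - M.real E := fun E hE =>
    toSignedMeasure_sub_apply hE
  obtain ⟨i, hi, hi_pos, hi_neg⟩ := s.exists_compl_positive_negative
  have hpos_nonneg : ∀ E, MeasurableSet E → 0 ≤ s.restrict i E := fun E hE => by
    simpa [VectorMeasure.restrict_apply _ hi hE] using
      (VectorMeasure.restrict_le_restrict_iff 0 s hi).1 hi_pos (hE.inter hi) inter_subset_right
  have hpos_le : ∀ E, MeasurableSet E → s.restrict i E ≤ ν E := fun E hE => by
    rw [VectorMeasure.restrict_apply _ hi hE, hs _ (hE.inter hi)]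
    linarith [hle _ (hE.inter hi), hν.mono hνpos hE (hE.inter hi) inter_subset_left]
  have hpos_zero : ∀ E, MeasurableSet E → s (E ∩ i) = 0 := fun E hE => by
    rw [← VectorMeasure.restrict_apply _ hi hE]
    exact hνpfa _ (s.restrict i).isFinAdd (s.restrict i).isCtblAdd hpos_nonneg hpos_le E hE
  rw [← toSignedMeasure_le_toSignedMeasure_iff, ← sub_nonpos, VectorMeasure.le_iff]
  intro E hE
  have hneg : s (E \ i) ≤ 0 := by
    simpa using (VectorMeasure.restrict_le_restrict_iff s 0 hi.compl).1 hi_neg (hE.diff hi)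
      fun _ hx => hx.2
  rw [← inter_union_sdiff E i, s.of_union disjoint_sdiff_inter.symm (hE.inter hi) (hE.diff hi),
    hpos_zero E hE]
  simpa using hneg

end

theorem sidak_components_general {X : Type*} [MeasurableSpace X]
    (p : X → Set X → ℝ) (hp : IsTransFun p)
    (μ μ₁ μ₂ : Set X → ℝ)
    (hinv : ∀ E : Set X, MeasurableSet E → markovOp p μ E = μ E)
    (h1 : IsFinAdd μ₁) (h1pos : IsNonnegSF μ₁) (h1ca : IsCtblAdd μ₁)
    (h2 : IsFinAdd μ₂) (h2pos : IsNonnegSF μ₂) (h2pfa : IsPurelyFinAdd μ₂)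
    (hsum : ∀ E : Set X, MeasurableSet E → μ E = μ₁ E + μ₂ E) :
    (∀ E : Set X, MeasurableSet E → markovOp p μ₁ E = μ₁ E) ∧
    (∀ E : Set X, MeasurableSet E → markovOp p μ₂ E = μ₂ E) := by
  set M := h1ca.toMeasure h1.empty h1pos
  have hM : ∀ E, MeasurableSet E → M.real E = μ₁ E := fun E hE =>
    h1ca.measureReal_toMeasure h1.empty h1pos hE
  have hA₁ : ∀ E, MeasurableSet E → markovOp p μ₁ E = (hp.kernel ∘ₘ M).real E := fun E hE =>
    (hp.markovOp_congr (fun F hF => (hM F hF).symm) hE).trans (hp.markovOp_measureReal M hE)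
  have hA : ∀ E, MeasurableSet E → markovOp p μ E = markovOp p μ₁ E + markovOp p μ₂ E :=
    fun E hE => (hp.markovOp_congr hsum hE).trans (hp.markovOp_add h1 h1pos h2 h2pos hE)
  have hle : hp.kernel ∘ₘ M ≤ M :=
    Measure.le_of_le_add_isPurelyFinAdd h2 h2pos h2pfa fun E hE => by
      linarith [hA₁ E hE, hA E hE, hinv E hE, hsum E hE, hM E hE,
        hp.markovOp_nonneg h2.empty h2pos hE]
  have hAM : hp.kernel ∘ₘ M = M :=
    Measure.eq_of_le_of_measure_univ_eq hle Measure.comp_apply_univ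
  have hinv₁ : ∀ E, MeasurableSet E → markovOp p μ₁ E = μ₁ E := fun E hE => by
    rw [hA₁ E hE, hAM, hM E hE]
  exact ⟨hinv₁, fun E hE => by linarith [hA E hE, hinv E hE, hsum E hE, hinv₁ E hE]⟩

/-- Šidak's theorem on the Yosida–Hewitt components: if `μ = μ₁ + μ₂` is invariant,
with `μ₁` countably additive and `μ₂` purely finitely additive, then `μ₁` and `μ₂`
are both invariant. -/
theorem sidak_components {X : Type*} [MeasurableSpace X]
    (hsingl : ∀ x : X, MeasurableSet ({x} : Set X))
    (p : X → Set X → ℝ) (hp : IsTransFun p)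
    (μ μ₁ μ₂ : Set X → ℝ)
    (hμ : IsFinAdd μ) (hμpos : IsNonnegSF μ)
    (hinv : ∀ E : Set X, MeasurableSet E → markovOp p μ E = μ E)
    (h1 : IsFinAdd μ₁) (h1pos : IsNonnegSF μ₁) (h1ca : IsCtblAdd μ₁)
    (h2 : IsFinAdd μ₂) (h2pos : IsNonnegSF μ₂) (h2pfa : IsPurelyFinAdd μ₂)
    (hsum : ∀ E : Set X, MeasurableSet E → μ E = μ₁ E + μ₂ E) :
    (∀ E : Set X, MeasurableSet E → markovOp p μ₁ E = μ₁ E) ∧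
    (∀ E : Set X, MeasurableSet E → markovOp p μ₂ E = μ₂ E) :=
  sidak_components_general p hp μ μ₁ μ₂ hinv h1 h1pos h1ca h2 h2pos h2pfa hsum
end

section
/- Non-uniform strong convergence of CM1: for every x₀ ∈ (0,1) and n ≥ 1, the total variation distance between μ_n = pⁿ(x₀,·) and the Dirac measure δ₀ equals x₀^{2ⁿ−1}; hence ‖μ_n − δ₀‖ → 0 as n → ∞ for each fixed x₀ ∈ (0,1), but for each n ≥ 1, sup_{x₀ ∈ (0,1)} ‖μ_n − δ₀‖ = 1, so the convergence is not uniform in x₀. -/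
open MeasureTheory Set Filter Topology Function

/-- The Dirac measure at `y`, as a set function. -/
noncomputable def diracSF (y : ℝ) (E : Set ℝ) : ℝ := E.indicator (fun _ => (1:ℝ)) y

/-- The transition function of CM1: `p(x,·) = x·δ_{x²} + (1-x)·δ₀` on `(0,1)`,
`p(0,·) = δ₀`, `p(1,·) = δ₁` (the formula below specializes correctly at `0` and `1`). -/
noncomputable def p1 (x : ℝ) (E : Set ℝ) : ℝ :=
  x * diracSF (x ^ 2) E + (1 - x) * diracSF 0 E

/-- The transition function of CM2: `p(x,·) = (1-x)·δ_{x²} + x·δ₀` on `(0,1)`,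
`p(0,·) = δ₀`, `p(1,·) = δ₁`. -/
noncomputable def p2 (x : ℝ) (E : Set ℝ) : ℝ :=
  if x = 1 then diracSF 1 E else (1 - x) * diracSF (x ^ 2) E + x * diracSF 0 E

/-- The transition function of CM3: the CM1 rule on `[0,1/2]`, the CM2 rule on `(1/2,1)`,
`p(1,·) = δ₁`. -/
noncomputable def p3 (x : ℝ) (E : Set ℝ) : ℝ :=
  if x = 1 then diracSF 1 E
  else if x ≤ 1 / 2 then x * diracSF (x ^ 2) E + (1 - x) * diracSF 0 E
  else (1 - x) * diracSF (x ^ 2) E + x * diracSF 0 E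

/-- The `n`-step transition function of CM1 (`p1n 0` is the identity kernel, and
`p1n (n+1) x E = ∫ p1n n (y,E) p(x,dy)` is the integral convolution). -/
noncomputable def p1n : ℕ → ℝ → Set ℝ → ℝ
  | 0 => fun x E => diracSF x E
  | n + 1 => fun x E => faIntegral (p1 x) fun y => p1n n y E

/-- The `n`-step transition function of CM2. -/
noncomputable def p2n : ℕ → ℝ → Set ℝ → ℝ
  | 0 => fun x E => diracSF x E
  | n + 1 => fun x E => faIntegral (p2 x) fun y => p2n n y E

/-- The `n`-step transition function of CM3. -/
noncomputable def p3n : ℕ → ℝ → Set ℝ → ℝ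
  | 0 => fun x E => diracSF x E
  | n + 1 => fun x E => faIntegral (p3 x) fun y => p3n n y E

/-!
Integrating against `p(x,·)` evaluates a function at `x²` and at `0` with weights `x` and
`1 - x`, and `0` is absorbing, so by induction `μ_n = x₀^{2ⁿ-1} δ_{x₀^{2ⁿ}} + (1 - x₀^{2ⁿ-1}) δ₀`.
Hence `μ_n - δ₀ = x₀^{2ⁿ-1} (δ_{x₀^{2ⁿ}} - δ₀)`, whose total variation is `x₀^{2ⁿ-1}`, attained
at the singleton `{x₀^{2ⁿ}}`. This tends to `0` in `n`, and to `1` as `x₀ → 1⁻` for fixed `n`.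
-/

lemma diracSF_of_mem {y : ℝ} {E : Set ℝ} (h : y ∈ E) : diracSF y E = 1 :=
  indicator_of_mem h _

lemma diracSF_of_notMem {y : ℝ} {E : Set ℝ} (h : y ∉ E) : diracSF y E = 0 :=
  indicator_of_notMem h _

lemma diracSF_setOf_lt (y t : ℝ) (f : ℝ → ℝ) :
    diracSF y {x | t < f x} = (Iio (f y)).indicator 1 t := by
  simp [diracSF, indicator_apply]

lemma diracSF_setOf_lt_neg (y t : ℝ) (f : ℝ → ℝ) :
    diracSF y {x | f x < -t} = (Iio (-f y)).indicator 1 t := by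
  simp [diracSF, indicator_apply, lt_neg]

lemma abs_diracSF_sub_diracSF_le_one (y z : ℝ) (E : Set ℝ) :
    |diracSF y E - diracSF z E| ≤ 1 := by
  by_cases hy : y ∈ E <;> by_cases hz : z ∈ E <;>
    simp [diracSF_of_mem, diracSF_of_notMem, hy, hz]

lemma integrableOn_Ioi_indicator_Iio (c : ℝ) :
    IntegrableOn ((Iio c).indicator (1 : ℝ → ℝ)) (Ioi 0) := by
  rw [IntegrableOn, integrable_indicator_iff measurableSet_Iio]
  refine integrableOn_const ?_
  rw [Measure.restrict_apply measurableSet_Iio, Iio_inter_Ioi]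
  simp [Real.volume_Ioo]

lemma integral_Ioi_indicator_Iio (c : ℝ) :
    ∫ t in Ioi 0, (Iio c).indicator (1 : ℝ → ℝ) t = max c 0 := by
  rw [integral_indicator measurableSet_Iio, Measure.restrict_restrict measurableSet_Iio,
    Iio_inter_Ioi, Pi.one_def, setIntegral_const, measureReal_def, Real.volume_Ioo,
    smul_eq_mul, mul_one, sub_zero, ENNReal.toReal_ofReal']

lemma faIntegral_mul_diracSF_add_mul_diracSF (a b y z : ℝ) (f : ℝ → ℝ) :
    faIntegral (fun E => a * diracSF y E + b * diracSF z E) f = a * f y + b * f z := by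
  have hint := integrableOn_Ioi_indicator_Iio
  simp only [faIntegral, diracSF_setOf_lt, diracSF_setOf_lt_neg]
  rw [integral_add ((hint _).const_mul a) ((hint _).const_mul b),
    integral_add ((hint _).const_mul a) ((hint _).const_mul b)]
  simp only [integral_const_mul, integral_Ioi_indicator_Iio]
  linear_combination a * max_zero_sub_max_neg_zero_eq_self (f y) +
    b * max_zero_sub_max_neg_zero_eq_self (f z)

lemma p1n_succ (n : ℕ) (x : ℝ) (E : Set ℝ) :
    p1n (n + 1) x E = x * p1n n (x ^ 2) E + (1 - x) * p1n n 0 E :=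
  faIntegral_mul_diracSF_add_mul_diracSF _ _ _ _ _

lemma p1n_zero_left (n : ℕ) (E : Set ℝ) : p1n n 0 E = diracSF 0 E := by
  induction n with
  | zero => rfl
  | succ n ih => rw [p1n_succ, ih]; ring

lemma p1n_eq (n : ℕ) (x : ℝ) (E : Set ℝ) :
    p1n n x E = x ^ (2 ^ n - 1) * diracSF (x ^ 2 ^ n) E +
      (1 - x ^ (2 ^ n - 1)) * diracSF 0 E := by
  induction n generalizing x with
  | zero => simp [p1n]
  | succ n ih =>
    have hexp : 2 ^ (n + 1) - 1 = 2 * (2 ^ n - 1) + 1 := by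
      have := Nat.one_le_two_pow (n := n); rw [pow_succ]; omega
    rw [p1n_succ, p1n_zero_left, ih, hexp, ← pow_mul, ← pow_mul, ← pow_succ' 2 n]
    ring

lemma p1n_sub_diracSF_zero (n : ℕ) (x : ℝ) (E : Set ℝ) :
    p1n n x E - diracSF 0 E = x ^ (2 ^ n - 1) * (diracSF (x ^ 2 ^ n) E - diracSF 0 E) := by
  rw [p1n_eq]; ring

lemma isLUB_abs_mul_diracSF_sub {a y z : ℝ} (ha : 0 ≤ a) (hyz : y ≠ z) :
    IsLUB {r : ℝ | ∃ E : Set ℝ, MeasurableSet E ∧ r = |a * (diracSF y E - diracSF z E)|} a := by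
  refine ⟨?_, fun c hc => hc ⟨{y}, measurableSet_singleton y, ?_⟩⟩
  · rintro r ⟨E, -, rfl⟩
    rw [abs_mul, abs_of_nonneg ha]
    exact mul_le_of_le_one_right ha (abs_diracSF_sub_diracSF_le_one y z E)
  · rw [diracSF_of_mem (mem_singleton y), diracSF_of_notMem (mem_singleton_iff.not.mpr hyz.symm),
      sub_zero, mul_one, abs_of_nonneg ha]

lemma isLUB_abs_p1n_sub_diracSF_zero {x : ℝ} (hx : 0 < x) (n : ℕ) :
    IsLUB {r : ℝ | ∃ E : Set ℝ, MeasurableSet E ∧ r = |p1n n x E - diracSF 0 E|}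
      (x ^ (2 ^ n - 1)) := by
  simp_rw [p1n_sub_diracSF_zero]
  exact isLUB_abs_mul_diracSF_sub (pow_nonneg hx.le _) (pow_pos hx _).ne'

lemma isLUB_image_pow_Ioo_zero_one (k : ℕ) : IsLUB ((· ^ k) '' Ioo (0 : ℝ) 1) 1 := by
  refine ⟨?_, fun c hc => ?_⟩
  · rintro _ ⟨x, hx, rfl⟩
    exact pow_le_one₀ hx.1.le hx.2.le
  · have hlim : Tendsto (· ^ k) (𝓝[<] (1 : ℝ)) (𝓝 1) := by
      simpa using ((continuous_pow k).tendsto (1 : ℝ)).mono_left nhdsWithin_le_nhds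
    exact le_of_tendsto hlim <|
      mem_of_superset (Ioo_mem_nhdsLT one_pos) fun x hx => hc (mem_image_of_mem _ hx)

lemma isLUB_biUnion_of_isLUB {ι α : Type*} [Preorder α] {I : Set ι} {s : ι → Set α}
    {u : ι → α} {c : α} (hs : ∀ i ∈ I, IsLUB (s i) (u i)) (hu : IsLUB (u '' I) c) :
    IsLUB {a | ∃ i ∈ I, a ∈ s i} c := by
  refine ⟨?_, fun b hb => hu.2 ?_⟩
  · rintro a ⟨i, hi, ha⟩
    exact ((hs i hi).1 ha).trans (hu.1 (mem_image_of_mem u hi))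
  · rintro _ ⟨i, hi, rfl⟩
    exact (hs i hi).2 fun a ha => hb ⟨i, hi, ha⟩

/-- Non-uniform strong convergence of CM1: the total variation distance
`‖μ_n - δ₀‖ = sup_E |μ_n(E) - δ₀(E)|` equals `x₀^{2ⁿ-1}`; it tends to `0` for each fixed
`x₀ ∈ (0,1)`, but its supremum over `x₀ ∈ (0,1)` equals `1` for every `n ≥ 1`. -/
theorem cm1_nonuniform_convergence :
    (∀ x₀ ∈ Set.Ioo (0:ℝ) 1, ∀ n : ℕ, 1 ≤ n →
      IsLUB {r : ℝ | ∃ E : Set ℝ, MeasurableSet E ∧ r = |p1n n x₀ E - diracSF 0 E|}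
        (x₀ ^ (2 ^ n - 1))) ∧
    (∀ x₀ ∈ Set.Ioo (0:ℝ) 1,
      Tendsto (fun n : ℕ =>
          sSup {r : ℝ | ∃ E : Set ℝ, MeasurableSet E ∧ r = |p1n n x₀ E - diracSF 0 E|})
        atTop (nhds 0)) ∧
    (∀ n : ℕ, 1 ≤ n →
      IsLUB {r : ℝ | ∃ x₀ ∈ Set.Ioo (0:ℝ) 1, ∃ E : Set ℝ,
        MeasurableSet E ∧ r = |p1n n x₀ E - diracSF 0 E|} 1) := by
  refine ⟨fun x₀ hx n _ => isLUB_abs_p1n_sub_diracSF_zero hx.1 n, fun x₀ hx => ?_, fun n _ => ?_⟩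
  · have hsSup n := (isLUB_abs_p1n_sub_diracSF_zero hx.1 n).csSup_eq ⟨_, ∅, .empty, rfl⟩
    have hexp : Tendsto (fun n : ℕ => 2 ^ n - 1) atTop atTop :=
      (tendsto_sub_atTop_nat 1).comp (tendsto_pow_atTop_atTop_of_one_lt one_lt_two)
    simp only [hsSup]
    exact (tendsto_pow_atTop_nhds_zero_of_lt_one hx.1.le hx.2).comp hexp
  · exact isLUB_biUnion_of_isLUB (fun x₀ hx => isLUB_abs_p1n_sub_diracSF_zero hx.1 n)
      (isLUB_image_pow_Ioo_zero_one (2 ^ n - 1))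
end
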